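/- Define g, h : ℝ^n × ℝ^n × ℝ → ℝ by g(x,y,z) = ‖y‖² + [((z+1)² + ‖y−x‖²)² + ((z−1)² + ‖y+x‖²)²]/16 + (z² + ‖x‖²)²/2 and h(x,y,z) = [((z+1)² + ‖y+x‖²)² + ((z−1)² + ‖y−x‖²)²]/16 + (z⁴ + ‖x‖⁴)/2. Then (i) for all x, y ∈ ℝ^n and z ∈ ℝ, g(x,y,z) − h(x,y,z) = ‖y − z·x‖², and (ii) both g and h are convex functions on ℝ^n × ℝ^n × ℝ. -/

import Mathlib

/-! Expanding the squares, `g − h` telescopes to `‖y‖² − 2z⟨x, y⟩ + z²‖x‖² = ‖y − z x‖²`.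
Each summand of `g` and `h` is `‖A p‖²` or its square for an affine map `A`, such as
`(x, y, z) ↦ (z + 1, y − x)`; `‖A p‖²` is convex and nonnegative, so its square is convex too. -/

open Matrix

/-- The first DC component of the DC-SOS decomposition of `‖y − z·x‖²`,
written with `‖u‖² = u ⬝ᵥ u`, on points `p = (x, y, z)`. -/
noncomputable def gDC {n : ℕ} (p : (Fin n → ℝ) × (Fin n → ℝ) × ℝ) : ℝ :=
  p.2.1 ⬝ᵥ p.2.1 +
    (((p.2.2 + 1) ^ 2 + (p.2.1 - p.1) ⬝ᵥ (p.2.1 - p.1)) ^ 2 +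
      ((p.2.2 - 1) ^ 2 + (p.2.1 + p.1) ⬝ᵥ (p.2.1 + p.1)) ^ 2) / 16 +
    (p.2.2 ^ 2 + p.1 ⬝ᵥ p.1) ^ 2 / 2

/-- The second DC component of the DC-SOS decomposition of `‖y − z·x‖²`. -/
noncomputable def hDC {n : ℕ} (p : (Fin n → ℝ) × (Fin n → ℝ) × ℝ) : ℝ :=
  (((p.2.2 + 1) ^ 2 + (p.2.1 + p.1) ⬝ᵥ (p.2.1 + p.1)) ^ 2 +
      ((p.2.2 - 1) ^ 2 + (p.2.1 - p.1) ⬝ᵥ (p.2.1 - p.1)) ^ 2) / 16 +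
    (p.2.2 ^ 4 + (p.1 ⬝ᵥ p.1) ^ 2) / 2

open Set

theorem ConvexOn.div_const {𝕜 E : Type*} [Field 𝕜] [LinearOrder 𝕜] [IsStrictOrderedRing 𝕜]
    [AddCommGroup E] [Module 𝕜 E] {s : Set E} {f : E → 𝕜} (hf : ConvexOn 𝕜 s f) {c : 𝕜}
    (hc : 0 ≤ c) : ConvexOn 𝕜 s fun x => f x / c := by
  simpa only [div_eq_mul_inv, smul_eq_mul, mul_comm] using hf.smul (inv_nonneg.2 hc)

section DotProduct

variable {𝕜 E ι : Type*} [Field 𝕜] [LinearOrder 𝕜] [IsStrictOrderedRing 𝕜]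
  [AddCommGroup E] [Module 𝕜 E] [Fintype ι]

theorem dotProduct_self_nonneg (u : ι → 𝕜) : 0 ≤ u ⬝ᵥ u :=
  Fintype.sum_nonneg fun i => mul_self_nonneg (u i)

theorem convexOn_dotProduct_self : ConvexOn 𝕜 univ fun u : ι → 𝕜 => u ⬝ᵥ u := by
  refine ⟨convex_univ, fun u _ v _ a b ha hb hab => ?_⟩
  simp only [dotProduct, smul_eq_mul, Finset.mul_sum, ← Finset.sum_add_distrib]
  refine Finset.sum_le_sum fun i _ => ?_
  simpa [sq] using (even_two.convexOn_pow (𝕜 := 𝕜)).2 (mem_univ (u i)) (mem_univ (v i)) ha hb hab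

theorem Even.convexOn_pow_comp {k : ℕ} (hk : Even k) (f : E →ᵃ[𝕜] 𝕜) :
    ConvexOn 𝕜 univ fun p => f p ^ k := by
  simpa only [preimage_univ, Function.comp_def] using (hk.convexOn_pow (𝕜 := 𝕜)).comp_affineMap f

theorem convexOn_dotProduct_self_comp (g : E →ᵃ[𝕜] ι → 𝕜) :
    ConvexOn 𝕜 univ fun p => g p ⬝ᵥ g p := by
  simpa only [preimage_univ, Function.comp_def] using
    (convexOn_dotProduct_self (𝕜 := 𝕜) (ι := ι)).comp_affineMap g

theorem convexOn_sq_add_dotProduct_self_comp_sq (f : E →ᵃ[𝕜] 𝕜) (g : E →ᵃ[𝕜] ι → 𝕜) :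
    ConvexOn 𝕜 univ fun p => (f p ^ 2 + g p ⬝ᵥ g p) ^ 2 :=
  ((even_two.convexOn_pow_comp f).add (convexOn_dotProduct_self_comp g)).pow
    (fun _ _ => add_nonneg (sq_nonneg _) (dotProduct_self_nonneg _)) 2

end DotProduct

section DC

variable (n : ℕ)

def xCoord : (Fin n → ℝ) × (Fin n → ℝ) × ℝ →ᵃ[ℝ] Fin n → ℝ :=
  (LinearMap.fst ℝ _ _).toAffineMap

def yCoord : (Fin n → ℝ) × (Fin n → ℝ) × ℝ →ᵃ[ℝ] Fin n → ℝ :=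
  (LinearMap.fst ℝ _ _ ∘ₗ LinearMap.snd ℝ _ _).toAffineMap

def zCoord : (Fin n → ℝ) × (Fin n → ℝ) × ℝ →ᵃ[ℝ] ℝ :=
  (LinearMap.snd ℝ _ _ ∘ₗ LinearMap.snd ℝ _ _).toAffineMap

variable {n}

theorem gDC_sub_hDC (x y : Fin n → ℝ) (z : ℝ) :
    gDC (x, y, z) - hDC (x, y, z) = (y - z • x) ⬝ᵥ (y - z • x) := by
  simp only [gDC, hDC, dotProduct_sub, dotProduct_add, sub_dotProduct, add_dotProduct,
    dotProduct_smul, smul_dotProduct, smul_eq_mul, dotProduct_comm x y]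
  ring

theorem convexOn_gDC : ConvexOn ℝ univ (gDC (n := n)) := by
  have hA := convexOn_sq_add_dotProduct_self_comp_sq
    (zCoord n + AffineMap.const ℝ _ 1) (yCoord n - xCoord n)
  have hB := convexOn_sq_add_dotProduct_self_comp_sq
    (zCoord n - AffineMap.const ℝ _ 1) (yCoord n + xCoord n)
  have hC := convexOn_sq_add_dotProduct_self_comp_sq (zCoord n) (xCoord n)
  exact ((convexOn_dotProduct_self_comp (yCoord n)).add ((hA.add hB).div_const (by norm_num))).add
    (hC.div_const (by norm_num))

theorem convexOn_hDC : ConvexOn ℝ univ (hDC (n := n)) := by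
  have hA := convexOn_sq_add_dotProduct_self_comp_sq
    (zCoord n + AffineMap.const ℝ _ 1) (yCoord n + xCoord n)
  have hB := convexOn_sq_add_dotProduct_self_comp_sq
    (zCoord n - AffineMap.const ℝ _ 1) (yCoord n - xCoord n)
  have hz := Even.convexOn_pow_comp ⟨2, rfl⟩ (zCoord n)
  have hx := (convexOn_dotProduct_self_comp (xCoord n)).pow
    (fun _ _ => dotProduct_self_nonneg _) 2
  exact ((hA.add hB).div_const (by norm_num)).add ((hz.add hx).div_const (by norm_num))

end DC

/-- DC-SOS decomposition of `‖y − z·x‖²`: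
the difference `g − h` equals `‖y − z·x‖²` and both `g` and `h` are convex. -/
theorem stmt17 {n : ℕ} :
    (∀ (x y : Fin n → ℝ) (z : ℝ),
      gDC (x, y, z) - hDC (x, y, z) = (y - z • x) ⬝ᵥ (y - z • x)) ∧
    ConvexOn ℝ (Set.univ : Set ((Fin n → ℝ) × (Fin n → ℝ) × ℝ)) gDC ∧
    ConvexOn ℝ (Set.univ : Set ((Fin n → ℝ) × (Fin n → ℝ) × ℝ)) hDC :=
  ⟨gDC_sub_hDC, convexOn_gDC, convexOn_hDC⟩
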